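/- Let C be an additive category with an automorphism Σ, having cokernels and a Σ-progenerator P, and assume add(P) = add(Σ(P)). Then the functor C(P,−): C → Γ(P;Σ)₀-mod is an equivalence of categories, where Γ(P;Σ)₀ = C(P,P)^op is the degree-zero component of the orbit ring. -/

import Mathlib

/-!
Statement 4. Let `C` be an additive category with an automorphism `Σ` (modelled by a shift by
`ℤ`), having cokernels and a `Σ`-progenerator `P`, and assume `add(P) = add(Σ(P))`. Then the
functor `C(P,−) : C → Γ(P;Σ)₀-mod` is an equivalence of categories, where
`Γ(P;Σ)₀ = C(P,P)ᵒᵖ` (realized as `End (Opposite.op P)`) is the degree-zero component of the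
orbit ring: the functor `preadditiveCoyonedaObj (Opposite.op P)` takes values in finitely
presented modules, is fully faithful, and is dense onto the finitely presented
`Γ(P;Σ)₀`-modules; hence it induces an equivalence `C ≌ Γ(P;Σ)₀-mod`.
-/

open CategoryTheory CategoryTheory.Limits

universe v u

namespace PaperDefs

variable {C : Type u} [Category.{v} C] [Preadditive C]

/-- `g` is a cokernel of `f`, i.e. the sequence `X → Y → Z → 0` is right-exact. -/
def IsCokernelOf {X Y Z : C} (f : X ⟶ Y) (g : Y ⟶ Z) : Prop :=
  f ≫ g = 0 ∧ ∀ ⦃W : C⦄ (h : Y ⟶ W), f ≫ h = 0 → ∃! u : Z ⟶ W, g ≫ u = h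

/-- The category `C` has cokernels: every morphism admits a cokernel. -/
def HasCokernelsP (C : Type u) [Category.{v} C] [Preadditive C] : Prop :=
  ∀ ⦃X Y : C⦄ (f : X ⟶ Y), ∃ (Z : C) (g : Y ⟶ Z), IsCokernelOf f g

/-- `Q` belongs to `add U`: it is a direct summand of a finite direct sum of objects of `U`. -/
def MemAdd (U : Set C) (Q : C) : Prop :=
  ∃ (k : ℕ) (F : Fin k → C) (_ : ∀ i, F i ∈ U) (s : ∀ i, Q ⟶ F i) (r : ∀ i, F i ⟶ Q),
    (∑ i, s i ≫ r i) = 𝟙 Q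

/-- `P` is projective: `C(P, -)` sends right-exact sequences in `C` to exact sequences
of abelian groups. -/
def PaperProjective (P : C) : Prop :=
  ∀ ⦃X Y Z : C⦄ (f : X ⟶ Y) (g : Y ⟶ Z), IsCokernelOf f g →
    (∀ u : P ⟶ Z, ∃ v : P ⟶ Y, v ≫ g = u) ∧
    (∀ v : P ⟶ Y, v ≫ g = 0 → ∃ w : P ⟶ X, w ≫ f = v)

/-- `P` is a progenerator: a projective object such that every object admits
a right-exact presentation by objects of `add P`. -/
def IsProgenerator (P : C) : Prop :=
  PaperProjective P ∧
    ∀ X : C, ∃ (P₁ P₀ : C) (f : P₁ ⟶ P₀) (g : P₀ ⟶ X),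
      MemAdd {P} P₁ ∧ MemAdd {P} P₀ ∧ IsCokernelOf f g

/-- The category of finitely presented left `R`-modules. -/
def FPModuleCat (R : Type v) [Ring R] :=
  CategoryTheory.ObjectProperty.FullSubcategory
    (fun M : ModuleCat.{v} R => Module.FinitePresentation R M)

instance (R : Type v) [Ring R] : Category (FPModuleCat R) :=
  CategoryTheory.ObjectProperty.FullSubcategory.category _

/-- The left action of `End X` on `unop X ⟶ Y` for `X : Cᵒᵖ` (as in the older Mathlib). -/
instance oldMulActionLeft {X : Cᵒᵖ} {Y : C} : MulAction (End X) (Opposite.unop X ⟶ Y) where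
  smul r f := r.unop ≫ f
  one_smul := Category.id_comp
  mul_smul _ _ _ := Category.assoc _ _ _

/-- The module structure of `unop X ⟶ Y` over `End X` for `X : Cᵒᵖ` (as in the older Mathlib). -/
instance oldModuleEndLeft {X : Cᵒᵖ} {Y : C} : Module (End X) (Opposite.unop X ⟶ Y) where
  smul_add _ _ _ := Preadditive.comp_add _ _ _ _ _ _
  smul_zero _ := Limits.comp_zero
  add_smul _ _ _ := Preadditive.add_comp _ _ _ _ _ _
  zero_smul _ := Limits.zero_comp

/-- The older Mathlib `preadditiveCoyonedaObj (X : Cᵒᵖ) : C ⥤ ModuleCat (End X)`. -/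
def oldPreadditiveCoyonedaObj (X : Cᵒᵖ) : C ⥤ ModuleCat.{v} (End X) where
  obj Y := ModuleCat.of _ (Opposite.unop X ⟶ Y)
  map f := ModuleCat.ofHom
    { toFun := fun g => g ≫ f
      map_add' := fun _ _ => Preadditive.add_comp _ _ _ _ _ _
      map_smul' := fun _ _ => Category.assoc _ _ _ }
  map_id _ := by ext; exact Category.comp_id _
  map_comp _ _ := by ext; exact (Category.assoc _ _ _).symm

end PaperDefs

namespace OrbitDefs

open PaperDefs

variable {C : Type u} [Category.{v} C] [Preadditive C] [HasShift C ℤ]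

/-- The set `{Σⁿ P | n ∈ ℤ}` of powers of the automorphism `Σ` applied to `P`. -/
def shiftOrbit (P : C) : Set C := Set.range (fun n : ℤ => (shiftFunctor C n).obj P)

/-- `P` is a `Σ`-progenerator: a projective object such that every object admits a
right-exact presentation by objects of `add {Σⁿ P | n ∈ ℤ}`. -/
def IsSigmaProgenerator (P : C) : Prop :=
  PaperProjective P ∧
    ∀ X : C, ∃ (P₁ P₀ : C) (f : P₁ ⟶ P₀) (g : P₀ ⟶ X),
      MemAdd (shiftOrbit P) P₁ ∧ MemAdd (shiftOrbit P) P₀ ∧ IsCokernelOf f g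

/-- The multiplication of the orbit ring `Γ(P; Σ) = ⊕ₙ C(P, Σⁿ P)ᵒᵖ`:
for `f ∈ C(P, Σⁿ P)` and `g ∈ C(P, Σᵐ P)`, the product is `f·g = Σⁿ(g) ∘ f ∈ C(P, Σ^{n+m} P)`. -/
def orbitMul (P : C) (n m : ℤ) (f : P ⟶ (shiftFunctor C n).obj P)
    (g : P ⟶ (shiftFunctor C m).obj P) : P ⟶ (shiftFunctor C (n + m)).obj P :=
  f ≫ (shiftFunctor C n).map g ≫ (shiftFunctorAdd' C m n (n + m) (by omega)).inv.app P

/-- The orbit ring `Γ(P; Σ)` is strongly graded: `Γ_n Γ_m = Γ_{n+m}` for all `n, m ∈ ℤ`,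
expressed componentwise: each component `Γ_{n+m}` is generated, as an additive group, by the
products of elements of `Γ_n` and of `Γ_m`. -/
def OrbitRingStronglyGraded (P : C) : Prop :=
  ∀ n m : ℤ,
    AddSubgroup.closure
      {x : P ⟶ (shiftFunctor C (n + m)).obj P |
        ∃ (f : P ⟶ (shiftFunctor C n).obj P) (g : P ⟶ (shiftFunctor C m).obj P),
          x = orbitMul P n m f g} = ⊤

end OrbitDefs

/-!
Since `add(P) = add(ΣP)`, applying `Σ` and `Σ⁻¹` repeatedly puts every `Σⁿ P` in `add(P)`,
so `P` is an ordinary progenerator. `C(P, -)` sends `add(P)` to finitely generated projective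
`End(P)ᵒᵖ`-modules, and by projectivity of `P` it sends a presentation `P₁ → P₀ → X → 0` to a
presentation of `C(P, X)`. A morphism out of an object of `add(P)` is determined by its
composites with maps from `P`; with the universal property of the cokernel this gives full
faithfulness. A finitely presented module, presented by a matrix over `End(P)`, is `C(P, X)`
for `X` the cokernel of the same matrix between finite biproducts of copies of `P`.
-/

namespace PaperDefs.MemAdd

variable {C : Type u} [Category.{v} C] [Preadditive C]

lemma of_fintype {U : Set C} {Q : C} {ι : Type*} [Fintype ι] (F : ι → C)
    (hF : ∀ i, F i ∈ U) (s : ∀ i, Q ⟶ F i) (r : ∀ i, F i ⟶ Q)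
    (h : ∑ i, s i ≫ r i = 𝟙 Q) : MemAdd U Q := by
  let e := Fintype.equivFin ι
  refine ⟨Fintype.card ι, F ∘ e.symm, fun _ => hF _, fun i => s (e.symm i),
    fun i => r (e.symm i), ?_⟩
  rw [← h]
  exact Equiv.sum_comp e.symm fun i => s i ≫ r i

lemma of_mem {U : Set C} {Q : C} (hQ : Q ∈ U) : MemAdd U Q :=
  ⟨1, fun _ => Q, fun _ => hQ, fun _ => 𝟙 Q, fun _ => 𝟙 Q, by simp⟩

lemma of_iso {U : Set C} {Q Q' : C} (h : MemAdd U Q) (e : Q ≅ Q') : MemAdd U Q' := by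
  obtain ⟨k, F, hF, s, r, hsr⟩ := h
  refine ⟨k, F, hF, fun i => e.inv ≫ s i, fun i => r i ≫ e.hom, ?_⟩
  calc ∑ i, (e.inv ≫ s i) ≫ r i ≫ e.hom = e.inv ≫ (∑ i, s i ≫ r i) ≫ e.hom := by
        simp only [Preadditive.comp_sum, Preadditive.sum_comp, Category.assoc]
    _ = 𝟙 Q' := by rw [hsr, Category.id_comp, e.inv_hom_id]

lemma trans {U V : Set C} {Q : C} (h : MemAdd U Q) (hUV : ∀ R ∈ U, MemAdd V R) :
    MemAdd V Q := by
  obtain ⟨k, F, hF, s, r, hsr⟩ := h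
  choose k' F' hF' s' r' hsr' using fun i => hUV (F i) (hF i)
  refine of_fintype (ι := Σ i : Fin k, Fin (k' i)) (fun p => F' p.1 p.2)
    (fun p => hF' p.1 p.2) (fun p => s p.1 ≫ s' p.1 p.2) (fun p => r' p.1 p.2 ≫ r p.1) ?_
  have hblock : ∀ i, ∑ j, (s i ≫ s' i j) ≫ r' i j ≫ r i = s i ≫ r i := fun i => by
    simp only [← Category.assoc, ← Preadditive.sum_comp]
    simp only [Category.assoc, ← Preadditive.comp_sum, hsr' i, Category.comp_id]
  rw [← Finset.univ_sigma_univ, Finset.sum_sigma]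
  simp only [hblock, hsr]

lemma trans_singleton {U : Set C} {Q R : C} (h : MemAdd {R} Q) (hR : MemAdd U R) :
    MemAdd U Q :=
  h.trans fun _ hR' => (Set.mem_singleton_iff.mp hR') ▸ hR

lemma map {D : Type*} [Category D] [Preadditive D] (G : C ⥤ D) [G.Additive]
    {R Q : C} (h : MemAdd {R} Q) : MemAdd {G.obj R} (G.obj Q) := by
  obtain ⟨k, F, hF, s, r, hsr⟩ := h
  refine ⟨k, fun i => G.obj (F i), fun i => congrArg G.obj (hF i),
    fun i => G.map (s i), fun i => G.map (r i), ?_⟩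
  simp_rw [← G.map_comp, ← G.map_sum, hsr, G.map_id]

lemma exists_sum_eq_id {Q R : C} (h : MemAdd {R} Q) :
    ∃ (k : ℕ) (s : Fin k → (Q ⟶ R)) (r : Fin k → (R ⟶ Q)), ∑ i, s i ≫ r i = 𝟙 Q := by
  obtain ⟨k, F, hF, s, r, hsr⟩ := h
  have hF' : ∀ i, F i = R := fun i => hF i
  refine ⟨k, fun i => s i ≫ eqToHom (hF' i), fun i => eqToHom (hF' i).symm ≫ r i, ?_⟩
  rw [← hsr]
  exact Finset.sum_congr rfl fun i _ => by simp

end PaperDefs.MemAdd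

namespace OrbitDefs

open PaperDefs

variable {C : Type u} [Category.{v} C] [Preadditive C] [HasFiniteBiproducts C] [HasShift C ℤ]

instance shiftFunctor_additive (n : ℤ) : (shiftFunctor C n).Additive :=
  have : HasBinaryBiproducts C := hasBinaryBiproducts_of_finite_biproducts C
  have := preservesBinaryBiproducts_of_preservesBinaryProducts (shiftFunctor C n)
  Functor.additive_of_preservesBinaryBiproducts _

variable {P : C}

lemma memAdd_shiftFunctor_obj_of_add_eq
    (hadd : {Q : C | MemAdd {P} Q} = {Q : C | MemAdd {(shiftFunctor C (1 : ℤ)).obj P} Q})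
    (n : ℤ) : MemAdd {P} ((shiftFunctor C n).obj P) := by
  have hsucc : MemAdd {P} ((shiftFunctor C (1 : ℤ)).obj P) :=
    (Set.ext_iff.mp hadd _).mpr (MemAdd.of_mem (Set.mem_singleton _))
  have hpred : MemAdd {P} ((shiftFunctor C (-1 : ℤ)).obj P) := by
    have h : MemAdd {(shiftFunctor C (1 : ℤ)).obj P} P :=
      (Set.ext_iff.mp hadd _).mp (MemAdd.of_mem (Set.mem_singleton _))
    refine (h.map (shiftFunctor C (-1 : ℤ))).trans_singleton ?_
    exact (MemAdd.of_mem (Set.mem_singleton _)).of_iso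
      ((shiftFunctorCompIsoId C (1 : ℤ) (-1) (by omega)).app P).symm
  induction n using Int.induction_on with
  | zero =>
    exact (MemAdd.of_mem (Set.mem_singleton _)).of_iso ((shiftFunctorZero C ℤ).app P).symm
  | succ n ih =>
    exact ((ih.map (shiftFunctor C (1 : ℤ))).trans_singleton hsucc).of_iso
      ((shiftFunctorAdd' C (n : ℤ) 1 (n + 1) rfl).app P).symm
  | pred n ih =>
    exact ((ih.map (shiftFunctor C (-1 : ℤ))).trans_singleton hpred).of_iso
      ((shiftFunctorAdd' C (-n : ℤ) (-1) (-n - 1) (by omega)).app P).symm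

lemma IsSigmaProgenerator.isProgenerator_of_add_eq (hP : IsSigmaProgenerator P)
    (hadd : {Q : C | MemAdd {P} Q} = {Q : C | MemAdd {(shiftFunctor C (1 : ℤ)).obj P} Q}) :
    IsProgenerator P := by
  have horbit : ∀ R ∈ shiftOrbit P, MemAdd {P} R := by
    rintro R ⟨n, rfl⟩
    exact memAdd_shiftFunctor_obj_of_add_eq hadd n
  refine ⟨hP.1, fun X => ?_⟩
  obtain ⟨P₁, P₀, f, g, h₁, h₀, hcok⟩ := hP.2 X
  exact ⟨P₁, P₀, f, g, h₁.trans horbit, h₀.trans horbit, hcok⟩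

end OrbitDefs

namespace PaperDefs

variable {C : Type u} [Category.{v} C] [Preadditive C]

lemma IsCokernelOf.eq_zero_of_comp_eq_zero {X Y Z W : C} {f : X ⟶ Y} {g : Y ⟶ Z}
    (hcok : IsCokernelOf f g) {h : Z ⟶ W} (hgh : g ≫ h = 0) : h = 0 := by
  obtain ⟨u, -, hu⟩ := hcok.2 (0 : Y ⟶ W) comp_zero
  rw [hu h hgh, ← hu 0 comp_zero]

open Opposite

-- `oldModuleEndLeft` is indexed by `unop X ⟶ Y`, so instance search does not see it on `P ⟶ Y`.
instance moduleEndOpHom {P Y : C} : Module (End (op P)) (P ⟶ Y) := oldModuleEndLeft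

variable {P : C}

def homToPi {Q : C} {k : ℕ} (s : Fin k → (Q ⟶ P)) :
    (P ⟶ Q) →ₗ[End (op P)] (Fin k → End (op P)) where
  toFun u i := (u ≫ s i).op
  map_add' u v := by funext i; simp only [Preadditive.add_comp, op_add, Pi.add_apply]
  map_smul' e u := by funext i; exact congrArg Quiver.Hom.op (Category.assoc _ _ _)

def piToHom {Q : C} {k : ℕ} (r : Fin k → (P ⟶ Q)) :
    (Fin k → End (op P)) →ₗ[End (op P)] (P ⟶ Q) where
  toFun v := ∑ i, (v i).unop ≫ r i
  map_add' v w := by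
    rw [← Finset.sum_add_distrib]
    exact Finset.sum_congr rfl fun i _ => Preadditive.add_comp _ _ _ _ _ _
  map_smul' e v := by
    change _ = e.unop ≫ _
    simp only [Pi.smul_apply, smul_eq_mul, End.mul_def, unop_comp, Category.assoc,
      Preadditive.comp_sum]

lemma piToHom_homToPi {Q : C} {k : ℕ} {s : Fin k → (Q ⟶ P)} {r : Fin k → (P ⟶ Q)}
    (hsr : ∑ i, s i ≫ r i = 𝟙 Q) (u : P ⟶ Q) : piToHom r (homToPi s u) = u := by
  change ∑ i, (u ≫ s i) ≫ r i = u
  simp only [Category.assoc, ← Preadditive.comp_sum, hsr, Category.comp_id]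

namespace MemAdd

lemma eq_zero_of_forall_comp_eq_zero {Q Y : C} (hQ : MemAdd {P} Q) {f : Q ⟶ Y}
    (hf : ∀ v : P ⟶ Q, v ≫ f = 0) : f = 0 := by
  obtain ⟨k, s, r, hsr⟩ := hQ.exists_sum_eq_id
  calc f = (∑ i, s i ≫ r i) ≫ f := by rw [hsr, Category.id_comp]
    _ = ∑ i, s i ≫ r i ≫ f := by rw [Preadditive.sum_comp]; simp only [Category.assoc]
    _ = 0 := by simp only [hf, comp_zero, Finset.sum_const_zero]

lemma exists_comp_eq_of_linearMap {Q Y : C} (hQ : MemAdd {P} Q)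
    (φ : (P ⟶ Q) →ₗ[End (op P)] (P ⟶ Y)) : ∃ ψ : Q ⟶ Y, ∀ v, v ≫ ψ = φ v := by
  obtain ⟨k, s, r, hsr⟩ := hQ.exists_sum_eq_id
  refine ⟨∑ i, s i ≫ φ (r i), fun v => ?_⟩
  have hterm : ∀ i, v ≫ s i ≫ φ (r i) = φ ((v ≫ s i) ≫ r i) := fun i =>
    ((φ.map_smul (v ≫ s i).op (r i)).trans (Category.assoc _ _ _)).symm
  rw [Preadditive.comp_sum]
  simp only [hterm, ← map_sum, ← Preadditive.comp_sum, Category.assoc, hsr, Category.comp_id]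

lemma finitePresentation_hom {Q : C} (hQ : MemAdd {P} Q) :
    Module.FinitePresentation (End (op P)) (P ⟶ Q) := by
  obtain ⟨k, s, r, hsr⟩ := hQ.exists_sum_eq_id
  have : Module.Finite (End (op P)) (P ⟶ Q) :=
    Module.Finite.of_surjective (piToHom r) fun u => ⟨homToPi s u, piToHom_homToPi hsr u⟩
  have : Module.Projective (End (op P)) (P ⟶ Q) :=
    Module.Projective.of_split (homToPi s) (piToHom r) (LinearMap.ext (piToHom_homToPi hsr))
  exact Module.finitePresentation_of_projective _ _

end MemAdd

variable (P) in
def compLinearMap {X Y : C} (f : X ⟶ Y) : (P ⟶ X) →ₗ[End (op P)] (P ⟶ Y) where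
  toFun u := u ≫ f
  map_add' _ _ := Preadditive.add_comp _ _ _ _ _ _
  map_smul' _ _ := Category.assoc _ _ _

namespace PaperProjective

variable {X P₁ P₀ : C} {d : P₁ ⟶ P₀} {g : P₀ ⟶ X}

lemma surjective_compLinearMap (hP : PaperProjective P) (hcok : IsCokernelOf d g) :
    Function.Surjective (compLinearMap P g) :=
  (hP d g hcok).1

lemma ker_compLinearMap (hP : PaperProjective P) (hcok : IsCokernelOf d g) :
    LinearMap.ker (compLinearMap P g) = LinearMap.range (compLinearMap P d) := by
  ext v
  refine ⟨fun hv => (hP d g hcok).2 v hv, ?_⟩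
  rintro ⟨w, rfl⟩
  exact (Category.assoc _ _ _).trans (by rw [hcok.1, comp_zero])

end PaperProjective

namespace IsProgenerator

lemma finitePresentation_hom (hP : IsProgenerator P) (X : C) :
    Module.FinitePresentation (End (op P)) (P ⟶ X) := by
  obtain ⟨P₁, P₀, d, g, h₁, h₀, hcok⟩ := hP.2 X
  have := h₀.finitePresentation_hom
  have := h₁.finitePresentation_hom
  refine Module.finitePresentation_of_surjective (compLinearMap P g)
    (hP.1.surjective_compLinearMap hcok) ?_
  rw [hP.1.ker_compLinearMap hcok, LinearMap.range_eq_map]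
  exact Module.Finite.fg_top.map _

lemma exists_comp_eq_of_linearMap (hP : IsProgenerator P) {X Y : C}
    (φ : (P ⟶ X) →ₗ[End (op P)] (P ⟶ Y)) :
    ∃ f : X ⟶ Y, ∀ u, u ≫ f = φ u := by
  obtain ⟨P₁, P₀, d, g, h₁, h₀, hcok⟩ := hP.2 X
  obtain ⟨ψ, hψ⟩ := h₀.exists_comp_eq_of_linearMap (φ ∘ₗ compLinearMap P g)
  have hdψ : d ≫ ψ = 0 := h₁.eq_zero_of_forall_comp_eq_zero fun w => by
    rw [← Category.assoc, hψ]
    change φ ((w ≫ d) ≫ g) = 0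
    rw [Category.assoc, hcok.1, comp_zero, map_zero]
  obtain ⟨f, hf, -⟩ := hcok.2 ψ hdψ
  refine ⟨f, fun u => ?_⟩
  obtain ⟨v, rfl⟩ := hP.1.surjective_compLinearMap hcok u
  exact (Category.assoc _ _ _).trans ((congrArg _ hf).trans (hψ v))

lemma ext_of_comp (hP : IsProgenerator P) {X Y : C} {f f' : X ⟶ Y}
    (h : ∀ u : P ⟶ X, u ≫ f = u ≫ f') : f = f' := by
  obtain ⟨P₁, P₀, d, g, h₁, h₀, hcok⟩ := hP.2 X
  rw [← sub_eq_zero]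
  refine hcok.eq_zero_of_comp_eq_zero (h₀.eq_zero_of_forall_comp_eq_zero fun v => ?_)
  rw [← Category.assoc, Preadditive.comp_sub, h, sub_self]

end IsProgenerator

section Biproducts

variable [HasFiniteBiproducts C]

variable (P) in
noncomputable def homBiprodEquiv (n : ℕ) :
    (P ⟶ ⨁ fun _ : Fin n => P) ≃ₗ[End (op P)] (Fin n → End (op P)) :=
  { homToPi (biproduct.π _) with
    invFun := piToHom (biproduct.ι _)
    left_inv := piToHom_homToPi biproduct.total
    right_inv := fun v => by
      funext j
      change ((piToHom (biproduct.ι _) v) ≫ biproduct.π _ j).op = v j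
      rw [piToHom, LinearMap.coe_mk, AddHom.coe_mk, ← biproduct.lift_eq, biproduct.lift_π]
      rfl }

lemma homBiprodEquiv_comp_matrix {m n : ℕ} (a : Fin m → Fin n → End (op P))
    (u : P ⟶ ⨁ fun _ : Fin m => P) :
    homBiprodEquiv P n (u ≫ biproduct.matrix fun i j => (a i j).unop) =
      Fintype.linearCombination (End (op P)) a (homBiprodEquiv P m u) := by
  funext j
  change ((u ≫ biproduct.matrix (fun i j => (a i j).unop)) ≫ biproduct.π _ j).op = _
  rw [Category.assoc, biproduct.matrix_π, biproduct.desc_eq, Preadditive.comp_sum, op_sum,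
    Fintype.linearCombination_apply, Finset.sum_apply]
  exact Finset.sum_congr rfl fun i _ => congrArg Quiver.Hom.op (Category.assoc _ _ _).symm

lemma PaperProjective.exists_linearEquiv_hom (hP : PaperProjective P) (hC : HasCokernelsP C)
    (M : Type*) [AddCommGroup M] [Module (End (op P)) M]
    [Module.FinitePresentation (End (op P)) M] :
    ∃ X : C, Nonempty ((P ⟶ X) ≃ₗ[End (op P)] M) := by
  obtain ⟨n, K, eM, hK⟩ := Module.FinitePresentation.exists_fin (End (op P)) M
  obtain ⟨m, a, rfl⟩ := Submodule.fg_iff_exists_fin_generating_family.mp hK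
  let δ : (⨁ fun _ : Fin m => P) ⟶ ⨁ fun _ : Fin n => P := biproduct.matrix fun i j => (a i j).unop
  obtain ⟨X, g, hcok⟩ := hC δ
  have hrange : (LinearMap.range (compLinearMap P δ)).map (homBiprodEquiv P n).toLinearMap =
      Submodule.span (End (op P)) (Set.range a) := by
    rw [← LinearMap.range_comp, ← Fintype.range_linearCombination]
    have : (homBiprodEquiv P n).toLinearMap ∘ₗ compLinearMap P _ =
        Fintype.linearCombination (End (op P)) a ∘ₗ (homBiprodEquiv P m).toLinearMap :=
      LinearMap.ext (homBiprodEquiv_comp_matrix a)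
    rw [this, LinearMap.range_comp_of_range_eq_top _ (LinearEquiv.range _)]
  exact ⟨X, ⟨(LinearMap.quotKerEquivOfSurjective _ (hP.surjective_compLinearMap hcok)).symm ≪≫ₗ
    Submodule.quotEquivOfEq _ _ (hP.ker_compLinearMap hcok) ≪≫ₗ
    Submodule.Quotient.equiv _ _ (homBiprodEquiv P n) hrange ≪≫ₗ eM.symm⟩⟩

end Biproducts

end PaperDefs

lemma CategoryTheory.Functor.nonempty_equivalence_fullSubcategory {C D : Type*} [Category C]
    [Category D] (F : C ⥤ D) [F.Full] [F.Faithful] (Q : ObjectProperty D)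
    (hF : ∀ X, Q (F.obj X)) (hQ : ∀ Y, Q Y → ∃ X, Nonempty (F.obj X ≅ Y)) :
    Nonempty (C ≌ Q.FullSubcategory) :=
  have : (Q.lift F hF).EssSurj := ⟨fun Y =>
    have ⟨X, ⟨e⟩⟩ := hQ Y.obj Y.property
    ⟨X, ⟨Q.isoMk e⟩⟩⟩
  have : (Q.lift F hF).IsEquivalence := {}
  ⟨(Q.lift F hF).asEquivalence⟩

open PaperDefs OrbitDefs in
theorem hom_functor_equivalence_onto_fp_modules_of_add_eq
    {C : Type u} [Category.{v} C] [Preadditive C] [HasFiniteBiproducts C] [HasShift C ℤ]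
    (hC : HasCokernelsP C) (P : C) (hP : IsSigmaProgenerator P)
    (hadd : {Q : C | MemAdd {P} Q} = {Q : C | MemAdd {(shiftFunctor C (1 : ℤ)).obj P} Q}) :
    (∀ X : C,
        Module.FinitePresentation (End (Opposite.op P))
          ((oldPreadditiveCoyonedaObj (Opposite.op P)).obj X)) ∧
    (oldPreadditiveCoyonedaObj (Opposite.op P)).Full ∧
    (oldPreadditiveCoyonedaObj (Opposite.op P)).Faithful ∧
    (∀ M : ModuleCat.{v} (End (Opposite.op P)), Module.FinitePresentation (End (Opposite.op P)) M →
        ∃ X : C, Nonempty ((oldPreadditiveCoyonedaObj (Opposite.op P)).obj X ≅ M)) ∧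
    Nonempty (C ≌ FPModuleCat (End (Opposite.op P))) := by
  have hP' : IsProgenerator P := hP.isProgenerator_of_add_eq hadd
  have hfp := hP'.finitePresentation_hom
  have hfull : (oldPreadditiveCoyonedaObj (Opposite.op P)).Full := ⟨fun φ =>
    have ⟨f, hf⟩ := hP'.exists_comp_eq_of_linearMap φ.hom
    ⟨f, ModuleCat.hom_ext (LinearMap.ext hf)⟩⟩
  have hfaithful : (oldPreadditiveCoyonedaObj (Opposite.op P)).Faithful := ⟨fun h =>
    hP'.ext_of_comp fun u => congrArg (fun φ => ModuleCat.Hom.hom φ u) h⟩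
  have hess : ∀ M : ModuleCat.{v} (End (Opposite.op P)),
      Module.FinitePresentation (End (Opposite.op P)) M →
      ∃ X : C, Nonempty ((oldPreadditiveCoyonedaObj (Opposite.op P)).obj X ≅ M) := fun M _ =>
    have ⟨X, ⟨e⟩⟩ := hP.1.exists_linearEquiv_hom hC M
    ⟨X, ⟨e.toModuleIso⟩⟩
  exact ⟨hfp, hfull, hfaithful, hess,
    (oldPreadditiveCoyonedaObj (Opposite.op P)).nonempty_equivalence_fullSubcategory _ hfp hess⟩
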